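/- arXiv:2207.07947 — 5 statements merged into one kernel-verified Lean document; each statement's English description precedes it below -/
import Mathlib

section
/- Let n ∈ ℕ and let F and G be two continuous distribution functions on ℝ. Let X_1,…,X_n be i.i.d. with distribution function F and Y_1,…,Y_n be i.i.d. with distribution function G. Then the random variable W_n^*(F; X_1,…,X_n) has the same distribution as W_n^*(G; Y_1,…,Y_n); i.e., the distribution of W_n^* under the hypothesis F = F_0 does not depend on F. -/
/-!
By continuity of `F`, each `F (X i)` is uniform on `[0, 1]` (probability integral transform), so
by independence the vector `(F (X 1), …, F (X n))` has the same law `U[0,1]ⁿ` for every `F`.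
Since `F` is monotone, `F (X_{i:n})` is the `i`-th order statistic of that vector; hence `W_n^*`
is one fixed measurable function of it (sort, locate the least maximiser `R` of `i/n - U_{i:n}`,
standardise), and its law does not depend on `F`.
-/

open MeasureTheory ProbabilityTheory Filter Topology Finset

section Measurability

variable {α β ι : Type*} [MeasurableSpace α] [MeasurableSpace β]

theorem measurable_bind_of_countable [Countable ι] {r : α → ι}
    (hr : ∀ i, MeasurableSet {a | r a = i}) {g : ι → α → β} (hg : ∀ i, Measurable (g i)) :
    Measurable fun a => g (r a) a := by
  intro s hs
  have hfib : (fun a => g (r a) a) ⁻¹' s = ⋃ i, {a | r a = i} ∩ g i ⁻¹' s := by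
    ext a
    simp
  rw [hfib]
  exact .iUnion fun i => (hr i).inter (hg i hs)

variable [LinearOrder β] [TopologicalSpace β] [OrderClosedTopology β] [SecondCountableTopology β]
  [OpensMeasurableSpace β] {n : ℕ}

theorem Tuple.measurableSet_sort_eq (σ : Equiv.Perm (Fin n)) :
    MeasurableSet {u : Fin n → β | Tuple.sort u = σ} := by
  simp_rw [eq_comm (b := σ), Tuple.eq_sort_iff, Monotone, Function.comp_apply, Set.ofPred_and,
    Set.ofPred_forall]
  refine .inter (.iInter fun i => .iInter fun j => .iInter fun _ => ?_)
    (.iInter fun i => .iInter fun j => .iInter fun _ => .imp ?_ (.const _))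
  · exact measurableSet_le (measurable_pi_apply _) (measurable_pi_apply _)
  · exact measurableSet_eq_fun (measurable_pi_apply _) (measurable_pi_apply _)

theorem Tuple.measurable_comp_sort : Measurable fun u : Fin n → β => u ∘ Tuple.sort u :=
  measurable_bind_of_countable Tuple.measurableSet_sort_eq fun σ =>
    measurable_pi_lambda _ fun i => measurable_pi_apply (σ i)

end Measurability

section LeastArgmax

variable {ι β : Type*} [Fintype ι] [LinearOrder ι] [Nonempty ι] [LinearOrder β]

def leastArgmax (g : ι → β) : ι :=
  ({k | ∀ i, g i ≤ g k} : Finset ι).min' <| by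
    obtain ⟨k, -, hk⟩ := exists_max_image univ g univ_nonempty
    exact ⟨k, by simpa using fun i => hk i (mem_univ i)⟩

theorem leastArgmax_eq_iff {g : ι → β} {k : ι} :
    leastArgmax g = k ↔ (∀ i, g i ≤ g k) ∧ ∀ j < k, g j < g k := by
  rw [leastArgmax, min'_eq_iff]
  simp only [mem_filter, mem_univ, true_and]
  refine and_congr_right fun hk => ⟨fun h j hjk => ?_, fun h j hj => ?_⟩
  · by_contra! hkj
    exact (h j fun i => (hk i).trans hkj).not_gt hjk
  · by_contra! hjk
    exact (h j hjk).not_ge (hj k)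

variable {α : Type*} [MeasurableSpace α] [MeasurableSpace β] [TopologicalSpace β]
  [OrderClosedTopology β] [SecondCountableTopology β] [OpensMeasurableSpace β]

theorem measurableSet_leastArgmax_eq {g : ι → α → β} (hg : ∀ i, Measurable (g i)) (k : ι) :
    MeasurableSet {a | leastArgmax (fun i => g i a) = k} := by
  simp_rw [leastArgmax_eq_iff, Set.ofPred_and, Set.ofPred_forall]
  exact .inter (.iInter fun i => measurableSet_le (hg i) (hg k))
    (.iInter fun j => .iInter fun _ => measurableSet_lt (hg j) (hg k))

end LeastArgmax

section Statistic

variable {n : ℕ}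

-- `s` is a sorted sample and `k : Fin n` stands for the paper's index `k + 1`.
noncomputable def deviation (s : Fin n → ℝ) (k : Fin n) : ℝ := ((k + 1 : ℕ) : ℝ) / n - s k

noncomputable def standardizedDeviation (s : Fin n → ℝ) (k : Fin n) : ℝ :=
  deviation s k / √(s k * (1 - s k))

noncomputable def wstarOfSorted [NeZero n] (s : Fin n → ℝ) : ℝ :=
  standardizedDeviation s (leastArgmax (deviation s))

noncomputable def wstar [NeZero n] (u : Fin n → ℝ) : ℝ :=
  wstarOfSorted (u ∘ Tuple.sort u)

theorem measurable_wstar [NeZero n] : Measurable (wstar (n := n)) := by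
  have hdev : ∀ k, Measurable fun s : Fin n → ℝ => deviation s k := fun k =>
    measurable_const.sub (measurable_pi_apply k)
  have hsorted : Measurable (wstarOfSorted (n := n)) :=
    measurable_bind_of_countable (g := fun k s => standardizedDeviation s k)
      (measurableSet_leastArgmax_eq hdev) fun k =>
      (hdev k).div ((measurable_pi_apply k).mul (measurable_const.sub (measurable_pi_apply k))).sqrt
  exact hsorted.comp Tuple.measurable_comp_sort

theorem leastArgmax_succ_eq [NeZero n] {g : ℕ → ℝ} {R : ℕ}
    (hR : R ∈ Icc 1 n ∧ (∀ i ∈ Icc 1 n, g i ≤ g R) ∧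
      ∀ k ∈ Icc 1 n, (∀ i ∈ Icc 1 n, g i ≤ g k) → R ≤ k) :
    ((leastArgmax fun k : Fin n => g (k + 1) : Fin n) : ℕ) + 1 = R := by
  obtain ⟨hRmem, hRmax, hRmin⟩ := hR
  have hsucc : ∀ k : Fin n, (k : ℕ) + 1 ∈ Icc 1 n := fun k => mem_Icc.2 ⟨by omega, k.2⟩
  rw [mem_Icc] at hRmem
  suffices leastArgmax (fun k : Fin n => g (k + 1)) = ⟨R - 1, by omega⟩ by
    rw [this]; dsimp; omega
  have hgR : g (R - 1 + 1) = g R := by rw [Nat.sub_add_cancel hRmem.1]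
  rw [leastArgmax_eq_iff, hgR]
  refine ⟨fun i => hRmax _ (hsucc i), fun j hj => ?_⟩
  by_contra! hjR
  have := hRmin _ (hsucc j) fun i hi => (hRmax i hi).trans hjR
  rw [Fin.lt_def] at hj
  dsimp at hj
  omega

theorem wstarOfSorted_eq [NeZero n] (s : ℕ → ℝ) {R : ℕ}
    (hR : R ∈ Icc 1 n ∧ (∀ i ∈ Icc 1 n, (i : ℝ) / n - s i ≤ (R : ℝ) / n - s R) ∧
      ∀ k ∈ Icc 1 n, (∀ i ∈ Icc 1 n, (i : ℝ) / n - s i ≤ (k : ℝ) / n - s k) → R ≤ k) :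
    wstarOfSorted (fun k : Fin n => s (k + 1)) = ((R : ℝ) / n - s R) / √(s R * (1 - s R)) := by
  have hR' : ((leastArgmax (deviation fun k : Fin n => s (k + 1)) : Fin n) : ℕ) + 1 = R :=
    leastArgmax_succ_eq (g := fun i : ℕ => (i : ℝ) / n - s i) hR
  rw [wstarOfSorted, standardizedDeviation, deviation, hR']

theorem wstar_comp_eq [NeZero n] {F : ℝ → ℝ} (hF : Monotone F) {x : Fin n → ℝ} {s : ℕ → ℝ}
    (hs : ∀ i j, 1 ≤ i → i ≤ j → j ≤ n → s i ≤ s j)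
    (hperm : ∃ σ : Equiv.Perm (Fin n), ∀ i : Fin n, s (i + 1) = x (σ i)) :
    wstar (fun i => F (x i)) = wstarOfSorted (fun k : Fin n => F (s (k + 1))) := by
  obtain ⟨σ, hσ⟩ := hperm
  have hFσ : (fun i => F (x i)) ∘ σ = fun k : Fin n => F (s (k + 1)) := by
    ext k; simp [hσ]
  have hmono : Monotone fun k : Fin n => F (s (k + 1)) := fun i j hij =>
    hF (hs _ _ (by omega) (by simpa using hij) (by omega))
  rw [wstar, ← (Tuple.comp_sort_eq_comp_iff_monotone.2 (hFσ ▸ hmono)), hFσ]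

end Statistic

section ProbabilityIntegralTransform

variable {Ω : Type*} [MeasurableSpace Ω] {μ : Measure Ω} {F : ℝ → ℝ} {X : Ω → ℝ}

theorem exists_setOf_le_eq_Iic (hFmono : Monotone F) (hFcont : Continuous F)
    (hFtop : Tendsto F atTop (𝓝 1)) {u : ℝ} (hu : u < 1) (hne : {x | F x ≤ u}.Nonempty) :
    ∃ q, F q = u ∧ {x | F x ≤ u} = Set.Iic q := by
  obtain ⟨T, hT⟩ := (hFtop.eventually_const_lt hu).exists
  have hbdd : BddAbove {x | F x ≤ u} :=
    ⟨T, fun x hx => le_of_lt (hFmono.reflect_lt (hx.trans_lt hT))⟩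
  set q := sSup {x | F x ≤ u}
  have hFq : F q ≤ u := (isClosed_le hFcont continuous_const).csSup_mem hne hbdd
  have hIic : {x | F x ≤ u} = Set.Iic q :=
    Set.Subset.antisymm (fun x hx => le_csSup hbdd hx) fun x hx => (hFmono hx).trans hFq
  refine ⟨q, hFq.antisymm (not_lt.1 fun hlt => ?_), hIic⟩
  have hright : ∀ᶠ x in 𝓝[>] q, F x < u :=
    nhdsWithin_le_nhds ((hFcont.tendsto q).eventually (gt_mem_nhds hlt))
  obtain ⟨x, hxu, hqx⟩ := (hright.and self_mem_nhdsWithin).exists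
  exact (le_csSup hbdd hxu.le).not_gt hqx

theorem measure_cdf_comp_le_eq (hFmono : Monotone F) (hFcont : Continuous F)
    (hFbot : Tendsto F atBot (𝓝 0)) (hFtop : Tendsto F atTop (𝓝 1))
    (hXdist : ∀ t, μ {ω | X ω ≤ t} = ENNReal.ofReal (F t)) {u : ℝ} (hu0 : 0 ≤ u) (hu1 : u < 1) :
    μ {ω | F (X ω) ≤ u} = ENNReal.ofReal u := by
  by_cases hne : {x | F x ≤ u}.Nonempty
  · obtain ⟨q, hFq, hIic⟩ := exists_setOf_le_eq_Iic hFmono hFcont hFtop hu1 hne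
    have hpre : {ω | F (X ω) ≤ u} = {ω | X ω ≤ q} := congrArg (Set.preimage X) hIic
    rw [hpre, hXdist, hFq]
  · have hu : u = 0 := hu0.antisymm' <| not_lt.1 fun hpos => by
      obtain ⟨x, hx⟩ := (hFbot.eventually_lt_const hpos).exists
      exact hne ⟨x, hx.le⟩
    have hempty : {ω | F (X ω) ≤ u} = ∅ :=
      Set.eq_empty_of_forall_notMem fun ω hω => hne ⟨X ω, hω⟩
    rw [hempty, hu, measure_empty, ENNReal.ofReal_zero]

theorem map_cdf_comp_eq_uniform [IsProbabilityMeasure μ] (hFmono : Monotone F)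
    (hFcont : Continuous F) (hFbot : Tendsto F atBot (𝓝 0)) (hFtop : Tendsto F atTop (𝓝 1))
    (hX : Measurable X) (hXdist : ∀ t, μ {ω | X ω ≤ t} = ENNReal.ofReal (F t)) :
    μ.map (fun ω => F (X ω)) = volume.restrict (Set.Icc 0 1) := by
  have hFX : Measurable fun ω => F (X ω) := hFcont.measurable.comp hX
  have := Measure.isProbabilityMeasure_map (μ := μ) hFX.aemeasurable
  have hF01 : ∀ x, F x ∈ Set.Icc 0 1 := fun x =>
    ⟨hFmono.le_of_tendsto hFbot x, hFmono.ge_of_tendsto hFtop x⟩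
  refine Measure.ext_of_Iic _ _ fun u => ?_
  have hIcc : Set.Iic u ∩ Set.Icc 0 1 = Set.Icc 0 (min u 1) := by
    ext x
    simp only [Set.mem_inter_iff, Set.mem_Iic, Set.mem_Icc, le_min_iff]
    tauto
  rw [Measure.map_apply hFX measurableSet_Iic, Measure.restrict_apply measurableSet_Iic, hIcc,
    Real.volume_Icc, sub_zero]
  rcases lt_or_ge u 0 with hu0 | hu0
  · have hempty : (fun ω => F (X ω)) ⁻¹' Set.Iic u = ∅ :=
      Set.eq_empty_of_forall_notMem fun ω hω => (hF01 _).1.not_gt (lt_of_le_of_lt hω hu0)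
    rw [hempty, measure_empty, ENNReal.ofReal_of_nonpos (min_le_of_left_le hu0.le)]
  rcases lt_or_ge u 1 with hu1 | hu1
  · rw [min_eq_left hu1.le]
    exact measure_cdf_comp_le_eq hFmono hFcont hFbot hFtop hXdist hu0 hu1
  · have huniv : (fun ω => F (X ω)) ⁻¹' Set.Iic u = Set.univ :=
      Set.eq_univ_of_forall fun ω => ((hF01 _).2.trans hu1 : _)
    rw [huniv, measure_univ, min_eq_right hu1, ENNReal.ofReal_one]

theorem map_cdf_comp_pi_eq_uniform {ι : Type*} [Fintype ι] [IsProbabilityMeasure μ]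
    (hFmono : Monotone F) (hFcont : Continuous F) (hFbot : Tendsto F atBot (𝓝 0))
    (hFtop : Tendsto F atTop (𝓝 1)) {X : ι → Ω → ℝ} (hX : ∀ i, Measurable (X i))
    (hindep : iIndepFun X μ) (hXdist : ∀ i t, μ {ω | X i ω ≤ t} = ENNReal.ofReal (F t)) :
    μ.map (fun ω i => F (X i ω)) = Measure.pi fun _ => volume.restrict (Set.Icc 0 1) := by
  refine ((hindep.comp (fun _ => F) fun _ => hFcont.measurable).map_fun_eq_pi_map
    fun i => (hFcont.measurable.comp (hX i)).aemeasurable).trans ?_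
  exact congrArg Measure.pi <| funext fun i =>
    map_cdf_comp_eq_uniform hFmono hFcont hFbot hFtop (hX i) (hXdist i)

end ProbabilityIntegralTransform

theorem Wstar_distribution_free
    {Ω Ω' : Type*} [MeasureSpace Ω] [MeasureSpace Ω']
    [IsProbabilityMeasure (ℙ : Measure Ω)] [IsProbabilityMeasure (ℙ : Measure Ω')]
    (n : ℕ) (hn : 0 < n)
    -- two continuous distribution functions
    (F G : ℝ → ℝ)
    (hFmono : Monotone F) (hFcont : Continuous F)
    (hFbot : Tendsto F atBot (𝓝 0)) (hFtop : Tendsto F atTop (𝓝 1))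
    (hGmono : Monotone G) (hGcont : Continuous G)
    (hGbot : Tendsto G atBot (𝓝 0)) (hGtop : Tendsto G atTop (𝓝 1))
    -- `X` i.i.d. with distribution function `F`, `Y` i.i.d. with distribution function `G`
    (X : Fin n → Ω → ℝ) (hXmeas : ∀ i, Measurable (X i))
    (hXindep : iIndepFun X ℙ)
    (hXdist : ∀ i t, ℙ {ω | X i ω ≤ t} = ENNReal.ofReal (F t))
    (Y : Fin n → Ω' → ℝ) (hYmeas : ∀ i, Measurable (Y i))
    (hYindep : iIndepFun Y ℙ)
    (hYdist : ∀ i t, ℙ {ω' | Y i ω' ≤ t} = ENNReal.ofReal (G t))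
    -- order statistics
    (ordX : Ω → ℕ → ℝ)
    (hordX : ∀ ω, (∀ i j, 1 ≤ i → i ≤ j → j ≤ n → ordX ω i ≤ ordX ω j) ∧
      ∃ σ : Equiv.Perm (Fin n), ∀ i : Fin n, ordX ω ((i : ℕ) + 1) = X (σ i) ω)
    (ordY : Ω' → ℕ → ℝ)
    (hordY : ∀ ω', (∀ i j, 1 ≤ i → i ≤ j → j ≤ n → ordY ω' i ≤ ordY ω' j) ∧
      ∃ σ : Equiv.Perm (Fin n), ∀ i : Fin n, ordY ω' ((i : ℕ) + 1) = Y (σ i) ω')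
    -- least maximizers
    (RX : Ω → ℕ)
    (hRX : ∀ ω, RX ω ∈ Finset.Icc 1 n ∧
      (∀ i ∈ Finset.Icc 1 n,
        (i : ℝ) / n - F (ordX ω i) ≤ (RX ω : ℝ) / n - F (ordX ω (RX ω))) ∧
      (∀ k ∈ Finset.Icc 1 n,
        (∀ i ∈ Finset.Icc 1 n,
          (i : ℝ) / n - F (ordX ω i) ≤ (k : ℝ) / n - F (ordX ω k)) → RX ω ≤ k))
    (RY : Ω' → ℕ)
    (hRY : ∀ ω', RY ω' ∈ Finset.Icc 1 n ∧
      (∀ i ∈ Finset.Icc 1 n,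
        (i : ℝ) / n - G (ordY ω' i) ≤ (RY ω' : ℝ) / n - G (ordY ω' (RY ω'))) ∧
      (∀ k ∈ Finset.Icc 1 n,
        (∀ i ∈ Finset.Icc 1 n,
          (i : ℝ) / n - G (ordY ω' i) ≤ (k : ℝ) / n - G (ordY ω' k)) → RY ω' ≤ k))
    -- the statistics
    (WX : Ω → ℝ)
    (hWX : ∀ ω, WX ω = ((RX ω : ℝ) / n - F (ordX ω (RX ω))) /
      Real.sqrt (F (ordX ω (RX ω)) * (1 - F (ordX ω (RX ω)))))
    (WY : Ω' → ℝ)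
    (hWY : ∀ ω', WY ω' = ((RY ω' : ℝ) / n - G (ordY ω' (RY ω'))) /
      Real.sqrt (G (ordY ω' (RY ω')) * (1 - G (ordY ω' (RY ω'))))) :
    ∀ t : ℝ, ℙ {ω | WX ω ≤ t} = ℙ {ω' | WY ω' ≤ t} := by
  intro t
  have : NeZero n := ⟨hn.ne'⟩
  have hWX' : WX = fun ω => wstar fun i => F (X i ω) := funext fun ω => by
    obtain ⟨hsorted, hperm⟩ := hordX ω
    rw [hWX, wstar_comp_eq hFmono hsorted hperm, wstarOfSorted_eq _ (hRX ω)]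
  have hWY' : WY = fun ω' => wstar fun i => G (Y i ω') := funext fun ω' => by
    obtain ⟨hsorted, hperm⟩ := hordY ω'
    rw [hWY, wstar_comp_eq hGmono hsorted hperm, wstarOfSorted_eq _ (hRY ω')]
  have hset : MeasurableSet {u : Fin n → ℝ | wstar u ≤ t} := measurable_wstar measurableSet_Iic
  have hFX : Measurable fun ω i => F (X i ω) :=
    measurable_pi_lambda _ fun i => hFcont.measurable.comp (hXmeas i)
  have hGY : Measurable fun ω' i => G (Y i ω') :=
    measurable_pi_lambda _ fun i => hGcont.measurable.comp (hYmeas i)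
  calc ℙ {ω | WX ω ≤ t} = Measure.map (fun ω i => F (X i ω)) ℙ {u | wstar u ≤ t} := by
        rw [hWX', Measure.map_apply hFX hset]; rfl
    _ = Measure.map (fun ω' i => G (Y i ω')) ℙ {u | wstar u ≤ t} := by
        rw [map_cdf_comp_pi_eq_uniform hFmono hFcont hFbot hFtop hXmeas hXindep hXdist,
          map_cdf_comp_pi_eq_uniform hGmono hGcont hGbot hGtop hYmeas hYindep hYdist]
    _ = ℙ {ω' | WY ω' ≤ t} := by
        rw [hWY', Measure.map_apply hGY hset]; rfl
end

section
/- Let f : [0,1] → ℝ be continuous with a unique maximizing point τ ∈ (0,1), let 0 < ε ≤ min(τ, 1−τ), set m_ε := sup{f(t) : t ∈ [0, τ−ε] ∪ [τ+ε, 1]} and δ_ε := (f(τ) − m_ε)/3. Then δ_ε > 0, and for every càdlàg g : [0,1] → ℝ with sup_{t∈[0,1]} |g(t) − f(t)| ≤ δ_ε one has max(g(t), g(t−)) < g(τ) for all t ∈ [0,1] \ (τ−ε, τ+ε]; consequently a(g) ∈ (τ−ε, τ+ε]. -/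
open Filter Topology

/-- A function `g : ℝ → ℝ` is càdlàg on `[0,1]`: right-continuous on `[0,1)`
and with a left limit at every point of `(0,1]`. -/
def Cadlag (g : ℝ → ℝ) : Prop :=
  (∀ t ∈ Set.Ico (0 : ℝ) 1, Tendsto g (𝓝[>] t) (𝓝 (g t))) ∧
  (∀ t ∈ Set.Ioc (0 : ℝ) 1, ∃ L : ℝ, Tendsto g (𝓝[<] t) (𝓝 L))

/-- The left limit `g(t−)`, with the convention `g(0−) := g(0)`. -/
noncomputable def leftVal (g : ℝ → ℝ) (t : ℝ) : ℝ :=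
  if t = 0 then g 0 else Function.leftLim g t

/-- `M(g) = sup_{t ∈ [0,1]} g(t)`. -/
noncomputable def Mval (g : ℝ → ℝ) : ℝ := sSup (g '' Set.Icc 0 1)

/-- The set `A(g) = {t ∈ [0,1] : max(g(t), g(t−)) = M(g)}`. -/
def Aset (g : ℝ → ℝ) : Set ℝ :=
  {t ∈ Set.Icc (0 : ℝ) 1 | max (g t) (leftVal g t) = Mval g}

/-- The argmax functional `a(g) = min A(g)`. -/
noncomputable def argmaxF (g : ℝ → ℝ) : ℝ := sInf (Aset g)

/-!
On the compact set `[0, τ-ε] ∪ [τ+ε, 1]` the continuous `f` attains its supremum `m` away from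
`τ`, so `m < f τ`. A `δ`-perturbation `g` is at most `m + δ` there, hence so are its left limits
at those points, while `g τ ≥ m + 2δ`.

For càdlàg `g`, `t ↦ max (g t) (g (t-))` is upper semicontinuous on `[0,1]`, so it attains its
maximum, which is `M(g)`; `A(g)` is then a nonempty compact superlevel set and contains its
infimum `a(g)`, which by the first part lies in `(τ-ε, τ+ε]`.
-/

open Set

-- `leftLim f a` falls back to `f a` when there is no left limit, so none is assumed.
theorem leftLim_le_of_eventually_le {α β : Type*} [LinearOrder α] [TopologicalSpace α]
    [OrderTopology α] [LinearOrder β] [TopologicalSpace β] [OrderClosedTopology β]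
    {f : α → β} {a : α} {c : β} (h : ∀ᶠ x in 𝓝[≤] a, f x ≤ c) :
    Function.leftLim f a ≤ c := by
  have hfa : f a ≤ c := h.self_of_nhdsWithin self_mem_Iic
  rcases eq_or_neBot (𝓝[<] a) with hbot | hne
  · rwa [leftLim_eq_of_eq_bot f hbot]
  by_cases hlim : ∃ y, Tendsto f (𝓝[<] a) (𝓝 y)
  · obtain ⟨y, hy⟩ := hlim
    rw [leftLim_eq_of_tendsto hy]
    exact le_of_tendsto hy (nhdsWithin_mono a Iio_subset_Iic_self h)
  · rwa [leftLim_eq_of_not_tendsto f hlim]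

section

variable {g : ℝ → ℝ} {a b c t : ℝ}

theorem max_leftVal_le (ht : 0 ≤ t) (h : ∀ᶠ s in 𝓝[≤] t, 0 ≤ s → g s ≤ c) :
    max (g t) (leftVal g t) ≤ c := by
  have hgt : g t ≤ c := h.self_of_nhdsWithin self_mem_Iic ht
  refine max_le hgt ?_
  rcases ht.eq_or_lt with rfl | ht
  · rwa [leftVal, if_pos rfl]
  rw [leftVal, if_neg ht.ne']
  refine leftLim_le_of_eventually_le ?_
  filter_upwards [h, Ioc_mem_nhdsLE ht] with s hs hs0 using hs hs0.1.le

theorem max_leftVal_le_of_forall_Ioo (h : ∀ s ∈ Ioo a b, g s ≤ c) {s : ℝ} (hs : s ∈ Ioo a b)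
    (hs0 : 0 ≤ s) : max (g s) (leftVal g s) ≤ c := by
  refine max_leftVal_le hs0 (mem_nhdsWithin_of_mem_nhds ?_)
  filter_upwards [isOpen_Ioo.mem_nhds hs] with u hu _ using h u hu

theorem max_leftVal_le_of_forall_Icc_union_Icc (h : ∀ s ∈ Icc 0 a ∪ Icc b 1, g s ≤ c)
    (ht : t ∈ Icc 0 1) (hab : t ∉ Ioc a b) : max (g t) (leftVal g t) ≤ c := by
  refine max_leftVal_le ht.1 ?_
  rcases le_or_gt t a with hta | hat
  · filter_upwards [self_mem_nhdsWithin] with s (hs : s ≤ t) hs0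
      using h s (Or.inl ⟨hs0, hs.trans hta⟩)
  · have hbt : b < t := lt_of_not_ge fun htb => hab ⟨hat, htb⟩
    filter_upwards [Ioc_mem_nhdsLE hbt] with s hs _ using h s (Or.inr ⟨hs.1.le, hs.2.trans ht.2⟩)

theorem max_leftVal_le_Mval (hbdd : BddAbove (g '' Icc 0 1)) (ht : t ∈ Icc 0 1) :
    max (g t) (leftVal g t) ≤ Mval g := by
  refine max_leftVal_le ht.1 ?_
  filter_upwards [self_mem_nhdsWithin] with s (hs : s ≤ t) hs0
    using le_csSup hbdd (mem_image_of_mem g ⟨hs0, hs.trans ht.2⟩)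

namespace Cadlag

theorem eventually_nhdsGE_max_leftVal_lt (hg : Cadlag g) (ht : t ∈ Icc 0 1)
    (hc : max (g t) (leftVal g t) < c) :
    ∀ᶠ s in 𝓝[≥] t, s ≤ 1 → max (g s) (leftVal g s) < c := by
  rcases ht.2.lt_or_eq with ht1 | rfl
  · obtain ⟨c', hc', hc'c⟩ := exists_between hc
    have hright : ∀ᶠ s in 𝓝[>] t, g s < c' :=
      (hg.1 t ⟨ht.1, ht1⟩).eventually_lt_const ((le_max_left _ _).trans_lt hc')
    obtain ⟨b, hb, hsub⟩ := mem_nhdsGT_iff_exists_Ioo_subset.1 hright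
    filter_upwards [Ico_mem_nhdsGE hb] with s hs _
    rcases hs.1.eq_or_lt with rfl | hts
    · exact hc
    · exact (max_leftVal_le_of_forall_Ioo (fun u hu => (hsub hu).le) ⟨hts, hs.2⟩
        (ht.1.trans hts.le)).trans_lt hc'c
  · filter_upwards [self_mem_nhdsWithin] with s (hs : 1 ≤ s) hs1
    rwa [le_antisymm hs1 hs]

theorem eventually_nhdsLE_max_leftVal_lt (hg : Cadlag g) (ht : t ∈ Icc 0 1)
    (hc : max (g t) (leftVal g t) < c) :
    ∀ᶠ s in 𝓝[≤] t, 0 ≤ s → max (g s) (leftVal g s) < c := by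
  rcases ht.1.eq_or_lt with rfl | ht0
  · filter_upwards [self_mem_nhdsWithin] with s (hs : s ≤ 0) hs0
    rwa [le_antisymm hs hs0]
  obtain ⟨L, hL⟩ := hg.2 t ⟨ht0, ht.2⟩
  have hLt : leftVal g t = L := by rw [leftVal, if_neg ht0.ne', leftLim_eq_of_tendsto hL]
  obtain ⟨c', hc', hc'c⟩ := exists_between hc
  have hleft : ∀ᶠ s in 𝓝[<] t, g s < c' :=
    hL.eventually_lt_const (hLt ▸ (le_max_right _ _).trans_lt hc')
  obtain ⟨a, ha, hsub⟩ := mem_nhdsLT_iff_exists_Ioo_subset.1 hleft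
  filter_upwards [Ioc_mem_nhdsLE ha] with s hs hs0
  rcases hs.2.eq_or_lt with rfl | hst
  · exact hc
  · exact (max_leftVal_le_of_forall_Ioo (fun u hu => (hsub hu).le) ⟨hs.1, hst⟩ hs0).trans_lt hc'c

theorem upperSemicontinuousOn_max_leftVal (hg : Cadlag g) :
    UpperSemicontinuousOn (fun t => max (g t) (leftVal g t)) (Icc 0 1) := by
  intro t ht c hc
  have h : ∀ᶠ s in 𝓝 t, s ∈ Icc (0 : ℝ) 1 → max (g s) (leftVal g s) < c := by
    rw [← nhdsLE_sup_nhdsGE, eventually_sup]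
    exact ⟨(hg.eventually_nhdsLE_max_leftVal_lt ht hc).mono fun s h hs => h hs.1,
      (hg.eventually_nhdsGE_max_leftVal_lt ht hc).mono fun s h hs => h hs.2⟩
  exact eventually_nhdsWithin_iff.2 h

theorem bddAbove_image (hg : Cadlag g) : BddAbove (g '' Icc 0 1) := by
  obtain ⟨C, hC⟩ := hg.upperSemicontinuousOn_max_leftVal.bddAbove_of_isCompact isCompact_Icc
  exact ⟨C, forall_mem_image.2 fun t ht => (le_max_left _ _).trans (hC (mem_image_of_mem _ ht))⟩

theorem argmaxF_mem_Aset (hg : Cadlag g) : argmaxF g ∈ Aset g := by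
  have husc := hg.upperSemicontinuousOn_max_leftVal
  obtain ⟨t₀, ht₀, hmax⟩ := husc.exists_isMaxOn (nonempty_Icc.2 zero_le_one) isCompact_Icc
  have hA : Aset g = Icc 0 1 ∩ (fun t => max (g t) (leftVal g t)) ⁻¹' Ici (Mval g) := by
    ext t
    exact and_congr_right fun ht =>
      ⟨ge_of_eq, (max_leftVal_le_Mval hg.bddAbove_image ht).antisymm⟩
  have hne : (Aset g).Nonempty :=
    ⟨t₀, ht₀, (max_leftVal_le_Mval hg.bddAbove_image ht₀).antisymm <|
      csSup_le ((nonempty_Icc.2 zero_le_one).image g) <|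
        forall_mem_image.2 fun t ht => (le_max_left _ _).trans (hmax ht)⟩
  exact (hA ▸ husc.isCompact_inter_preimage_Ici isCompact_Icc _ : IsCompact (Aset g)).sInf_mem hne

end Cadlag

end

theorem basic_inequality_near_unique_max
    (f : ℝ → ℝ) (hf : ContinuousOn f (Set.Icc 0 1))
    (τ : ℝ) (hτ : τ ∈ Set.Ioo (0 : ℝ) 1)
    (huniq : ∀ t ∈ Set.Icc (0 : ℝ) 1, t ≠ τ → f t < f τ)
    (ε : ℝ) (hε : 0 < ε) (hετ : ε ≤ min τ (1 - τ))
    (m δ : ℝ)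
    (hm : m = sSup (f '' (Set.Icc 0 (τ - ε) ∪ Set.Icc (τ + ε) 1)))
    (hδ : δ = (f τ - m) / 3) :
    0 < δ ∧
      ∀ g : ℝ → ℝ, Cadlag g → (∀ t ∈ Set.Icc (0 : ℝ) 1, |g t - f t| ≤ δ) →
        (∀ t ∈ Set.Icc (0 : ℝ) 1, t ∉ Set.Ioc (τ - ε) (τ + ε) →
            max (g t) (leftVal g t) < g τ) ∧
          argmaxF g ∈ Set.Ioc (τ - ε) (τ + ε) := by
  set K := Icc 0 (τ - ε) ∪ Icc (τ + ε) 1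
  have hετ' := le_min_iff.1 hετ
  have hKsub : K ⊆ Icc 0 1 :=
    union_subset (Icc_subset_Icc le_rfl (by linarith [hτ.2])) (Icc_subset_Icc (by linarith) le_rfl)
  have hK : IsCompact K := isCompact_Icc.union isCompact_Icc
  have hfK : ContinuousOn f K := hf.mono hKsub
  have hτK : τ ∉ K := by rintro (h | h) <;> linarith [h.1, h.2]
  have hmτ : m < f τ := hm ▸ (hK.sSup_lt_iff_of_continuous ⟨0, .inl ⟨le_rfl, by linarith⟩⟩ hfK _).2
    fun t ht => huniq t (hKsub ht) (ne_of_mem_of_not_mem ht hτK)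
  refine ⟨by rw [hδ]; linarith, fun g hg hgf => ?_⟩
  have hgK : ∀ t ∈ K, g t ≤ m + δ := fun t ht => by
    have hft : f t ≤ m := hm ▸ le_csSup (hK.bddAbove_image hfK) (mem_image_of_mem f ht)
    linarith [(abs_le.1 (hgf t (hKsub ht))).2]
  have hτI : τ ∈ Icc (0 : ℝ) 1 := Ioo_subset_Icc_self hτ
  have hgτ : f τ - δ ≤ g τ := by linarith [(abs_le.1 (hgf τ hτI)).1]
  have hout : ∀ t ∈ Icc (0 : ℝ) 1, t ∉ Ioc (τ - ε) (τ + ε) → max (g t) (leftVal g t) < g τ :=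
    fun t ht hto => (max_leftVal_le_of_forall_Icc_union_Icc hgK ht hto).trans_lt (by linarith)
  refine ⟨hout, by_contra fun hnot => ?_⟩
  obtain ⟨haI, haM⟩ := hg.argmaxF_mem_Aset
  have hlt := hout _ haI hnot
  rw [haM] at hlt
  exact hlt.not_ge (le_csSup hg.bddAbove_image (mem_image_of_mem g hτI))
end

section
/- Let f : [0,1] → ℝ be continuous with a unique maximizing point τ ∈ [0,1], and let (f_n) be a sequence of càdlàg functions on [0,1] with sup_{t∈[0,1]} |f_n(t) − f(t)| → 0 as n → ∞. Then a(f_n) → τ = a(f); i.e., the argmax-functional a is continuous (with respect to uniform convergence) at every continuous function with a unique maximizing point. -/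
open Filter Topology

/-!
A continuous `f` with a unique maximiser `τ` on the compact `[0,1]` stays below `f τ - δ` off
any neighbourhood of `τ`. If `g` is uniformly `δ / 2`-close to `f`, then `g t` and `g (t-)` are
below `f t + δ / 2` while `M(g) > f τ - δ / 2`, so `A(g)` lies in that neighbourhood, and so does
`a(g)`, a point of the closure of `A(g)`. That `A(g)` is nonempty for càdlàg `g` comes from
compactness: a maximising sequence clusters at some `t`, and the only cluster values of `g` at
`t` are `g t` and `g (t-)`.
-/

open Set

theorem IsCompact.exists_superlevel_subset_of_forall_lt {X : Type*} [TopologicalSpace X]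
    {K U : Set X} {f : X → ℝ} {τ : X} (hK : IsCompact K) (hf : ContinuousOn f K)
    (huniq : ∀ t ∈ K, t ≠ τ → f t < f τ) (hU : U ∈ 𝓝 τ) :
    ∃ δ > 0, {t ∈ K | f τ - δ < f t} ⊆ U := by
  have hgap : ∀ t ∈ K \ interior U, 0 < f τ - f t := fun t ht =>
    sub_pos.2 <| huniq t ht.1 fun h => ht.2 (h ▸ mem_interior_iff_mem_nhds.2 hU)
  obtain ⟨δ, hδ, hle⟩ := (hK.diff isOpen_interior).exists_forall_le'
    (continuousOn_const.sub (hf.mono sdiff_subset)) hgap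
  refine ⟨δ, hδ, fun t ⟨htK, hlt⟩ => interior_subset (not_not.1 fun ht => ?_)⟩
  have : δ ≤ f τ - f t := hle t ⟨htK, ht⟩
  linarith

variable {f g : ℝ → ℝ}

theorem leftVal_eq_of_continuousOn (hf : ContinuousOn f (Icc 0 1)) {t : ℝ} (ht : t ∈ Icc 0 1) :
    leftVal f t = f t := by
  rcases ht.1.eq_or_lt with rfl | ht0
  · exact if_pos rfl
  · rw [leftVal, if_neg ht0.ne']
    exact leftLim_eq_of_tendsto
      ((hf t ht).mono_of_mem_nhdsWithin (Icc_mem_nhdsLT_of_mem ⟨ht0, ht.2⟩)).tendsto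

theorem Aset_eq_of_continuousOn (hf : ContinuousOn f (Icc 0 1)) :
    Aset f = {t ∈ Icc 0 1 | f t = Mval f} := by
  ext t
  refine and_congr_right fun ht => ?_
  rw [leftVal_eq_of_continuousOn hf ht, max_self]

theorem Aset_eq_singleton_of_continuousOn (hf : ContinuousOn f (Icc 0 1)) {τ : ℝ}
    (hτ : τ ∈ Icc 0 1) (huniq : ∀ t ∈ Icc 0 1, t ≠ τ → f t < f τ) : Aset f = {τ} := by
  have hM : Mval f = f τ := IsGreatest.csSup_eq
    ⟨mem_image_of_mem f hτ, forall_mem_image.2 fun t ht =>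
      (eq_or_ne t τ).elim (fun h => (congrArg f h).le) fun h => (huniq t ht h).le⟩
  rw [Aset_eq_of_continuousOn hf, hM]
  ext t
  refine ⟨fun ⟨ht, hft⟩ => not_not.1 fun hne => (huniq t ht hne).ne hft, ?_⟩
  rintro rfl
  exact ⟨hτ, rfl⟩

theorem argmaxF_mem_closure (h : (Aset g).Nonempty) : argmaxF g ∈ closure (Aset g) :=
  csInf_mem_closure h ⟨0, fun _ ht => ht.1.1⟩

theorem BddAbove.image_of_forall_dist_lt {α : Type*} {s : Set α} {f g : α → ℝ} {η : ℝ}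
    (hf : BddAbove (f '' s)) (hfg : ∀ x ∈ s, dist (f x) (g x) < η) : BddAbove (g '' s) := by
  obtain ⟨B, hB⟩ := hf
  refine ⟨B + η, forall_mem_image.2 fun x hx => ?_⟩
  have := hB (mem_image_of_mem f hx)
  linarith [(abs_sub_lt_iff.1 (hfg x hx)).2]

namespace Cadlag

variable (hg : Cadlag g)
include hg

theorem tendsto_leftVal {t : ℝ} (ht : t ∈ Ioc 0 1) :
    Tendsto g (𝓝[<] t) (𝓝 (leftVal g t)) := by
  obtain ⟨L, hL⟩ := hg.2 t ht
  rwa [leftVal, if_neg ht.1.ne', leftLim_eq_of_tendsto hL]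

theorem continuousWithinAt_Icc {t : ℝ} (ht : t ∈ Icc 0 1) :
    ContinuousWithinAt g (Icc t 1) t := by
  rcases ht.2.eq_or_lt with rfl | ht1
  · simp [continuousWithinAt_singleton]
  · exact (continuousWithinAt_Ioi_iff_Ici.1 (hg.1 t ⟨ht.1, ht1⟩)).mono Icc_subset_Ici_self

theorem leftVal_le {h : ℝ → ℝ} (hh : ContinuousOn h (Icc 0 1))
    (hgh : ∀ s ∈ Icc 0 1, g s ≤ h s) {t : ℝ} (ht : t ∈ Icc 0 1) : leftVal g t ≤ h t := by
  rcases ht.1.eq_or_lt with rfl | ht0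
  · exact (if_pos rfl).trans_le (hgh 0 ht)
  · have hIcc : Icc 0 1 ∈ 𝓝[<] t := Icc_mem_nhdsLT_of_mem ⟨ht0, ht.2⟩
    exact le_of_tendsto_of_tendsto (hg.tendsto_leftVal ⟨ht0, ht.2⟩)
      ((hh t ht).mono_of_mem_nhdsWithin hIcc).tendsto (eventually_of_mem hIcc hgh)

theorem eq_or_leftVal_eq_of_tendsto {u : ℕ → ℝ} {t c : ℝ} (hu : ∀ k, u k ∈ Icc 0 1)
    (hut : Tendsto u atTop (𝓝 t)) (hc : Tendsto (g ∘ u) atTop (𝓝 c)) :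
    g t = c ∨ leftVal g t = c := by
  have ht : t ∈ Icc 0 1 := isClosed_Icc.mem_of_tendsto hut (.of_forall hu)
  by_cases hfreq : ∃ᶠ k in atTop, u k < t
  · obtain ⟨φ, hφ, hlt⟩ := extraction_of_frequently_atTop hfreq
    have hleft : Tendsto (u ∘ φ) atTop (𝓝[<] t) :=
      tendsto_nhdsWithin_iff.2 ⟨hut.comp hφ.tendsto_atTop, .of_forall hlt⟩
    have ht0 : 0 < t := (hu (φ 0)).1.trans_lt (hlt 0)
    exact .inr <| tendsto_nhds_unique ((hg.tendsto_leftVal ⟨ht0, ht.2⟩).comp hleft)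
      (hc.comp hφ.tendsto_atTop)
  · have hright : Tendsto u atTop (𝓝[Icc t 1] t) :=
      tendsto_nhdsWithin_iff.2 ⟨hut, (not_frequently.1 hfreq).mono fun k hk =>
        ⟨not_lt.1 hk, (hu k).2⟩⟩
    exact .inl <| tendsto_nhds_unique ((hg.continuousWithinAt_Icc ht).tendsto.comp hright) hc

theorem Aset_nonempty (hb : BddAbove (g '' Icc 0 1)) : (Aset g).Nonempty := by
  obtain ⟨v, -, hvM, hv⟩ := exists_seq_tendsto_sSup ((nonempty_Icc.2 zero_le_one).image g) hb
  choose u hu hgu using hv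
  obtain ⟨t, ht, φ, hφ, hut⟩ := isCompact_Icc.tendsto_subseq hu
  have hM : Tendsto (g ∘ (u ∘ φ)) atTop (𝓝 (Mval g)) := by
    simpa only [Function.comp_def, hgu, Mval] using hvM.comp hφ.tendsto_atTop
  have hle : ∀ s ∈ Icc 0 1, g s ≤ Mval g := fun s hs => le_csSup hb (mem_image_of_mem g hs)
  refine ⟨t, ht, le_antisymm (max_le (hle t ht) (hg.leftVal_le continuousOn_const hle ht)) ?_⟩
  rcases hg.eq_or_leftVal_eq_of_tendsto (fun k => hu (φ k)) hut hM with h | h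
  · exact h ▸ le_max_left _ _
  · exact h ▸ le_max_right _ _

theorem sub_two_mul_lt_of_mem_Aset (hf : ContinuousOn f (Icc 0 1)) {η : ℝ}
    (hfg : ∀ s ∈ Icc 0 1, dist (f s) (g s) < η) {t s : ℝ} (ht : t ∈ Aset g)
    (hs : s ∈ Icc 0 1) : f s - 2 * η < f t := by
  have hclose : ∀ x ∈ Icc 0 1, |f x - g x| < η := hfg
  have hup : ∀ x ∈ Icc 0 1, g x ≤ f x + η := fun x hx => by
    linarith [(abs_sub_lt_iff.1 (hclose x hx)).2]
  have hbdd : BddAbove (g '' Icc 0 1) :=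
    (isCompact_Icc.bddAbove_image hf).image_of_forall_dist_lt hfg
  have hgs : g s ≤ max (g t) (leftVal g t) := ht.2 ▸ le_csSup hbdd (mem_image_of_mem g hs)
  have hgt : max (g t) (leftVal g t) ≤ f t + η :=
    max_le (hup t ht.1) (hg.leftVal_le (hf.add continuousOn_const) hup ht.1)
  linarith [(abs_sub_lt_iff.1 (hclose s hs)).1]

end Cadlag

theorem argmaxF_continuous_at_unique_max
    (f : ℝ → ℝ) (hf : ContinuousOn f (Set.Icc 0 1))
    (τ : ℝ) (hτ : τ ∈ Set.Icc (0 : ℝ) 1)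
    (huniq : ∀ t ∈ Set.Icc (0 : ℝ) 1, t ≠ τ → f t < f τ)
    (fn : ℕ → ℝ → ℝ) (hfn : ∀ n, Cadlag (fn n))
    (hconv : TendstoUniformlyOn fn f atTop (Set.Icc 0 1)) :
    Tendsto (fun n => argmaxF (fn n)) atTop (𝓝 τ) ∧ argmaxF f = τ := by
  refine ⟨Metric.nhds_basis_closedBall.tendsto_right_iff.2 fun ε hε => ?_, by
    rw [argmaxF, Aset_eq_singleton_of_continuousOn hf hτ huniq, csInf_singleton]⟩
  obtain ⟨δ, hδ, hsub⟩ := isCompact_Icc.exists_superlevel_subset_of_forall_lt hf huniq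
    (Metric.closedBall_mem_nhds τ hε)
  filter_upwards [Metric.tendstoUniformlyOn_iff.1 hconv (δ / 2) (half_pos hδ)] with n hn
  have hA : Aset (fn n) ⊆ Metric.closedBall τ ε := fun t ht =>
    hsub ⟨ht.1, by linarith [(hfn n).sub_two_mul_lt_of_mem_Aset hf hn ht hτ]⟩
  have hne : (Aset (fn n)).Nonempty :=
    (hfn n).Aset_nonempty ((isCompact_Icc.bddAbove_image hf).image_of_forall_dist_lt hn)
  exact Metric.isClosed_closedBall.closure_subset_iff.2 hA (argmaxF_mem_closure hne)
end

section
/- Let D := F − F_0 and Q(x) := D(x)/√(F_0(x)(1−F_0(x))) for x with 0 < F_0(x) < 1. Then τ is a maximizing point of both D and Q; more precisely M := sup_{x∈ℝ} D(x) = D(τ) = (δ−β)·F_0(τ)·(1−F_0(τ)) and S := sup_{x : 0<F_0(x)<1} Q(x) = Q(τ) = (δ−β)·√(F_0(τ)(1−F_0(τ))), and M < S. -/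
/-!
Writing `t = F₀(τ)`, the choice of `β` makes `D(x) = (δ - β) · (min(F₀(x), t) - F₀(x) t)`, i.e.
`δ - β > 0` times the covariance `min(s, t) - s t` of the Brownian bridge at `s = F₀(x)`.
For fixed `t ∈ [0, 1]` this covariance peaks at `s = t`, giving the maximum of `D` at `τ`; `Q` is
`δ - β` times `√(t(1 - t))` times a correlation, which is at most `1` by Cauchy–Schwarz.
Finally `M < S` because `u < √u` for `u = t(1 - t) ∈ (0, 1)`.
-/

open Filter Topology

noncomputable section

def bridgeCov (s t : ℝ) : ℝ := min s t - s * t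

lemma bridgeCov_comm (s t : ℝ) : bridgeCov s t = bridgeCov t s := by
  rw [bridgeCov, bridgeCov, min_comm, mul_comm]

lemma bridgeCov_self (t : ℝ) : bridgeCov t t = t * (1 - t) := by
  rw [bridgeCov, min_self]; ring

lemma bridgeCov_of_le {s t : ℝ} (h : s ≤ t) : bridgeCov s t = s * (1 - t) := by
  rw [bridgeCov, min_eq_left h]; ring

lemma bridgeCov_le_self {s t : ℝ} (ht0 : 0 ≤ t) (ht1 : t ≤ 1) :
    bridgeCov s t ≤ bridgeCov t t := by
  rw [bridgeCov_self]
  rcases le_total s t with hst | hts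
  · rw [bridgeCov_of_le hst]
    exact mul_le_mul_of_nonneg_right hst (sub_nonneg.2 ht1)
  · rw [bridgeCov_comm, bridgeCov_of_le hts]
    exact mul_le_mul_of_nonneg_left (by linarith) ht0

lemma bridgeCov_le_sqrt_mul_sqrt_of_le {s t : ℝ} (hs : 0 ≤ s) (hst : s ≤ t) (ht : t ≤ 1) :
    bridgeCov s t ≤ √(bridgeCov s s) * √(bridgeCov t t) := by
  have hsum : 0 ≤ s * (1 - t) := mul_nonneg hs (by linarith)
  rw [bridgeCov_of_le hst, bridgeCov_self, bridgeCov_self, ← Real.sqrt_mul' _ (by nlinarith),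
    Real.le_sqrt hsum (by nlinarith)]
  -- the gap is `s (1 - t) (t - s) ≥ 0`
  nlinarith [mul_nonneg hsum (sub_nonneg.2 hst)]

lemma bridgeCov_le_sqrt_mul_sqrt {s t : ℝ} (hs0 : 0 ≤ s) (hs1 : s ≤ 1) (ht0 : 0 ≤ t)
    (ht1 : t ≤ 1) : bridgeCov s t ≤ √(bridgeCov s s) * √(bridgeCov t t) := by
  rcases le_total s t with hst | hts
  · exact bridgeCov_le_sqrt_mul_sqrt_of_le hs0 hst ht1
  · rw [bridgeCov_comm, mul_comm]
    exact bridgeCov_le_sqrt_mul_sqrt_of_le ht0 hts hs1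

section Contamination

variable {F0 F : ℝ → ℝ} {τ δ β : ℝ}

lemma delta_sub_beta_identities (hτ1 : F0 τ < 1) (hβ : β = (1 - δ * F0 τ) / (1 - F0 τ)) :
    (δ - β) * (1 - F0 τ) = δ - 1 ∧ 1 - β = (δ - β) * F0 τ := by
  have hβt : β * (1 - F0 τ) = 1 - δ * F0 τ := by
    rw [hβ, div_mul_cancel₀ _ (sub_ne_zero.2 hτ1.ne')]
  constructor <;> linear_combination -hβt

lemma delta_sub_beta_pos (hτ1 : F0 τ < 1) (hδ : 1 < δ)
    (hβ : β = (1 - δ * F0 τ) / (1 - F0 τ)) : 0 < δ - β :=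
  pos_of_mul_pos_left (a := δ - β) (b := 1 - F0 τ)
    (by linarith [(delta_sub_beta_identities hτ1 hβ).1]) (by linarith)

lemma sub_eq_mul_bridgeCov (hmono : Monotone F0) (hτ1 : F0 τ < 1)
    (hβ : β = (1 - δ * F0 τ) / (1 - F0 τ))
    (hF : ∀ x, F x = if x ≤ τ then δ * F0 x else β * (F0 x - F0 τ) + δ * F0 τ) (x : ℝ) :
    F x - F0 x = (δ - β) * bridgeCov (F0 x) (F0 τ) := by
  obtain ⟨hleft, hright⟩ := delta_sub_beta_identities hτ1 hβ
  rw [hF]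
  split_ifs with hx
  · rw [bridgeCov_of_le (hmono hx)]
    linear_combination -F0 x * hleft
  · rw [bridgeCov_comm, bridgeCov_of_le (hmono (le_of_not_ge hx))]
    linear_combination -F0 x * hright

end Contamination

end

theorem tau_maximizes_D_and_Q_general
    (F0 : ℝ → ℝ) (hmono : Monotone F0)
    (τ : ℝ) (hτ0 : 0 < F0 τ) (hτ1 : F0 τ < 1)
    (δ : ℝ) (hδ : 1 < δ)
    (β : ℝ) (hβ : β = (1 - δ * F0 τ) / (1 - F0 τ))
    (F : ℝ → ℝ)
    (hF : ∀ x, F x = if x ≤ τ then δ * F0 x else β * (F0 x - F0 τ) + δ * F0 τ)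
    (D : ℝ → ℝ) (hD : ∀ x, D x = F x - F0 x)
    (Q : ℝ → ℝ) (hQ : ∀ x, Q x = D x / Real.sqrt (F0 x * (1 - F0 x))) :
    D τ = (δ - β) * F0 τ * (1 - F0 τ) ∧
      IsGreatest (Set.range D) ((δ - β) * F0 τ * (1 - F0 τ)) ∧
      Q τ = (δ - β) * Real.sqrt (F0 τ * (1 - F0 τ)) ∧
      IsGreatest (Q '' {x | 0 < F0 x ∧ F0 x < 1})
        ((δ - β) * Real.sqrt (F0 τ * (1 - F0 τ))) ∧
      (δ - β) * F0 τ * (1 - F0 τ) < (δ - β) * Real.sqrt (F0 τ * (1 - F0 τ)) := by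
  have hc := delta_sub_beta_pos hτ1 hδ hβ
  have hDx x : D x = (δ - β) * bridgeCov (F0 x) (F0 τ) := by
    rw [hD, sub_eq_mul_bridgeCov hmono hτ1 hβ hF]
  have hvar : 0 < F0 τ * (1 - F0 τ) := mul_pos hτ0 (by linarith)
  have hDτ : D τ = (δ - β) * F0 τ * (1 - F0 τ) := by rw [hDx, bridgeCov_self, mul_assoc]
  have hQτ : Q τ = (δ - β) * √(F0 τ * (1 - F0 τ)) := by
    rw [hQ, hDτ, mul_assoc, mul_div_assoc, Real.div_sqrt]
  refine ⟨hDτ, ⟨⟨τ, hDτ⟩, ?_⟩, hQτ, ⟨⟨τ, ⟨hτ0, hτ1⟩, hQτ⟩, ?_⟩, ?_⟩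
  · rintro _ ⟨x, rfl⟩
    rw [hDx, mul_assoc, ← bridgeCov_self]
    exact mul_le_mul_of_nonneg_left (bridgeCov_le_self hτ0.le hτ1.le) hc.le
  · rintro _ ⟨x, ⟨hx0, hx1⟩, rfl⟩
    rw [hQ, hDx, div_le_iff₀ (Real.sqrt_pos.2 (mul_pos hx0 (by linarith))), mul_assoc,
      ← bridgeCov_self, ← bridgeCov_self, mul_comm √_]
    exact mul_le_mul_of_nonneg_left
      (bridgeCov_le_sqrt_mul_sqrt hx0.le hx1.le hτ0.le hτ1.le) hc.le
  · rw [mul_assoc]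
    exact mul_lt_mul_of_pos_left
      (Real.lt_sqrt_self_iff.2 ⟨hvar.ne', by nlinarith⟩) hc

theorem tau_maximizes_D_and_Q
    (F0 : ℝ → ℝ) (hmono : Monotone F0) (hcont : Continuous F0)
    (hbot : Tendsto F0 atBot (𝓝 0)) (htop : Tendsto F0 atTop (𝓝 1))
    (τ : ℝ) (hτ0 : 0 < F0 τ) (hτ1 : F0 τ < 1)
    (δ : ℝ) (hδ : 1 < δ) (hδτ : δ * F0 τ < 1)
    (β : ℝ) (hβ : β = (1 - δ * F0 τ) / (1 - F0 τ))
    (F : ℝ → ℝ)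
    (hF : ∀ x, F x = if x ≤ τ then δ * F0 x else β * (F0 x - F0 τ) + δ * F0 τ)
    (D : ℝ → ℝ) (hD : ∀ x, D x = F x - F0 x)
    (Q : ℝ → ℝ) (hQ : ∀ x, Q x = D x / Real.sqrt (F0 x * (1 - F0 x))) :
    D τ = (δ - β) * F0 τ * (1 - F0 τ) ∧
      IsGreatest (Set.range D) ((δ - β) * F0 τ * (1 - F0 τ)) ∧
      Q τ = (δ - β) * Real.sqrt (F0 τ * (1 - F0 τ)) ∧
      IsGreatest (Q '' {x | 0 < F0 x ∧ F0 x < 1})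
        ((δ - β) * Real.sqrt (F0 τ * (1 - F0 τ))) ∧
      (δ - β) * F0 τ * (1 - F0 τ) < (δ - β) * Real.sqrt (F0 τ * (1 - F0 τ)) :=
  tau_maximizes_D_and_Q_general F0 hmono τ hτ0 hτ1 δ hδ β hβ F hF D hD Q hQ
end

section
/- Let D := F − F_0 and Q^*(x) := D(x)/√(F_0(τ)(1−F_0(τ))) for x ∈ ℝ. Then sup_{x∈ℝ} Q^*(x) = Q^*(τ) = (δ−β)·√(F_0(τ)(1−F_0(τ))) = sup_{x : 0<F_0(x)<1} D(x)/√(F_0(x)(1−F_0(x))); i.e., the supremum of the constant-weighted process Q^* equals the supremum S of the standardized process Q. -/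
/-! `F` rescales the mass of `F0` by `δ > 1` on `(-∞, τ]` and by `β < 1` on `(τ, ∞)`, so
`D = F - F0` equals `(δ - 1) F0` up to `τ` and `(1 - β) (1 - F0)` after it: it rises and then
falls, peaking at `τ`. After standardizing by `√(F0 (1 - F0))` the two branches become
`(δ - 1) √(F0 / (1 - F0))` and `(1 - β) √((1 - F0) / F0)`, again increasing and then decreasing in
`F0`, so the standardized process peaks at `τ` as well, where it coincides with `Q*`. -/

open Filter Topology

section StandardizedRatio

variable {p q : ℝ}

lemma div_sqrt_mul_one_sub (hq : 0 ≤ q) : q / √(q * (1 - q)) = √q / √(1 - q) := by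
  rw [Real.sqrt_mul hq, div_mul_eq_div_div, Real.div_sqrt]

lemma div_sqrt_mul_one_sub_le (hq : 0 < q) (hqp : q ≤ p) (hp : p < 1) :
    q / √(q * (1 - q)) ≤ p / √(p * (1 - p)) := by
  rw [div_sqrt_mul_one_sub hq.le, div_sqrt_mul_one_sub (hq.le.trans hqp)]
  have hp' : 0 < √(1 - p) := Real.sqrt_pos.mpr (by linarith)
  gcongr

lemma one_sub_div_sqrt_mul_one_sub_le (hp : 0 < p) (hpq : p ≤ q) (hq : q < 1) :
    (1 - q) / √(q * (1 - q)) ≤ (1 - p) / √(p * (1 - p)) := by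
  have h := div_sqrt_mul_one_sub_le (q := 1 - q) (p := 1 - p) (by linarith) (by linarith)
    (by linarith)
  simpa only [sub_sub_cancel, mul_comm (1 - q), mul_comm (1 - p)] using h

end StandardizedRatio

noncomputable def piecewiseScaledCDF (F0 : ℝ → ℝ) (τ δ β x : ℝ) : ℝ :=
  if x ≤ τ then δ * F0 x else β * (F0 x - F0 τ) + δ * F0 τ

namespace piecewiseScaledCDF

variable {F0 : ℝ → ℝ} {τ δ β x : ℝ}

lemma sub_of_le (hx : x ≤ τ) : piecewiseScaledCDF F0 τ δ β x - F0 x = (δ - 1) * F0 x := by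
  rw [piecewiseScaledCDF, if_pos hx]
  ring

/-- `hmass` is the choice of `β` that makes `F` tend to `1` at `+∞`. -/
lemma sub_of_lt (hmass : β * (1 - F0 τ) + δ * F0 τ = 1) (hx : τ < x) :
    piecewiseScaledCDF F0 τ δ β x - F0 x = (1 - β) * (1 - F0 x) := by
  rw [piecewiseScaledCDF, if_neg hx.not_ge]
  linear_combination hmass

lemma sub_le (hmono : Monotone F0) (hδ : 1 ≤ δ) (hmass : β * (1 - F0 τ) + δ * F0 τ = 1)
    (hτ0 : 0 ≤ F0 τ) (hτ1 : F0 τ < 1) (x : ℝ) :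
    piecewiseScaledCDF F0 τ δ β x - F0 x ≤ (δ - 1) * F0 τ := by
  rcases le_or_gt x τ with hx | hx
  · rw [sub_of_le hx]
    exact mul_le_mul_of_nonneg_left (hmono hx) (by linarith)
  · have hβ1 : β ≤ 1 := by nlinarith
    rw [sub_of_lt hmass hx]
    nlinarith [hmono hx.le]

lemma sub_div_sqrt_le (hmono : Monotone F0) (hδ : 1 ≤ δ)
    (hmass : β * (1 - F0 τ) + δ * F0 τ = 1) (hτ0 : 0 < F0 τ) (hτ1 : F0 τ < 1)
    (hx0 : 0 < F0 x) (hx1 : F0 x < 1) :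
    (piecewiseScaledCDF F0 τ δ β x - F0 x) / √(F0 x * (1 - F0 x)) ≤
      (δ - 1) * F0 τ / √(F0 τ * (1 - F0 τ)) := by
  rcases le_or_gt x τ with hx | hx
  · rw [sub_of_le hx, mul_div_assoc, mul_div_assoc]
    exact mul_le_mul_of_nonneg_left (div_sqrt_mul_one_sub_le hx0 (hmono hx) hτ1) (by linarith)
  · have hβ1 : β ≤ 1 := by nlinarith
    rw [sub_of_lt hmass hx, show (δ - 1) * F0 τ = (1 - β) * (1 - F0 τ) by linear_combination hmass,
      mul_div_assoc, mul_div_assoc]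
    exact mul_le_mul_of_nonneg_left
      (one_sub_div_sqrt_mul_one_sub_le hτ0 (hmono hx.le) hx1) (by linarith)

end piecewiseScaledCDF

theorem sup_Qstar_eq_sup_Q_general
    (F0 : ℝ → ℝ) (hmono : Monotone F0)
    (τ : ℝ) (hτ0 : 0 < F0 τ) (hτ1 : F0 τ < 1)
    (δ : ℝ) (hδ : 1 < δ)
    (β : ℝ) (hβ : β = (1 - δ * F0 τ) / (1 - F0 τ))
    (F : ℝ → ℝ)
    (hF : ∀ x, F x = if x ≤ τ then δ * F0 x else β * (F0 x - F0 τ) + δ * F0 τ)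
    (D : ℝ → ℝ) (hD : ∀ x, D x = F x - F0 x)
    (Qstar : ℝ → ℝ) (hQstar : ∀ x, Qstar x = D x / Real.sqrt (F0 τ * (1 - F0 τ))) :
    Qstar τ = (δ - β) * Real.sqrt (F0 τ * (1 - F0 τ)) ∧
      IsGreatest (Set.range Qstar) ((δ - β) * Real.sqrt (F0 τ * (1 - F0 τ))) ∧
      IsGreatest ((fun x => D x / Real.sqrt (F0 x * (1 - F0 x))) '' {x | 0 < F0 x ∧ F0 x < 1})
        ((δ - β) * Real.sqrt (F0 τ * (1 - F0 τ))) := by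
  have hmass : β * (1 - F0 τ) + δ * F0 τ = 1 := by
    rw [hβ, div_mul_cancel₀ _ (sub_ne_zero.mpr hτ1.ne')]
    ring
  have hDx : ∀ x, D x = piecewiseScaledCDF F0 τ δ β x - F0 x := fun x => by
    rw [hD, hF, piecewiseScaledCDF]
  have hpeak : (δ - 1) * F0 τ / √(F0 τ * (1 - F0 τ)) = (δ - β) * √(F0 τ * (1 - F0 τ)) := by
    rw [show (δ - 1) * F0 τ = (δ - β) * (F0 τ * (1 - F0 τ)) by linear_combination F0 τ * hmass,
      mul_div_assoc, Real.div_sqrt]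
  have hDτ : D τ = (δ - 1) * F0 τ := by rw [hDx, piecewiseScaledCDF.sub_of_le le_rfl]
  have hQτ : Qstar τ = (δ - β) * √(F0 τ * (1 - F0 τ)) := by rw [hQstar, hDτ, hpeak]
  refine ⟨hQτ, ⟨⟨τ, hQτ⟩, ?_⟩, ⟨⟨τ, ⟨hτ0, hτ1⟩, show D τ / _ = _ by rw [hDτ, hpeak]⟩, ?_⟩⟩
  · rintro _ ⟨x, rfl⟩
    rw [hQstar, hDx, ← hpeak]
    gcongr
    exact piecewiseScaledCDF.sub_le hmono hδ.le hmass hτ0.le hτ1 x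
  · rintro _ ⟨x, ⟨hx0, hx1⟩, rfl⟩
    rw [← hpeak]
    show D x / _ ≤ _
    rw [hDx]
    exact piecewiseScaledCDF.sub_div_sqrt_le hmono hδ.le hmass hτ0 hτ1 hx0 hx1

theorem sup_Qstar_eq_sup_Q
    (F0 : ℝ → ℝ) (hmono : Monotone F0) (hcont : Continuous F0)
    (hbot : Tendsto F0 atBot (𝓝 0)) (htop : Tendsto F0 atTop (𝓝 1))
    (τ : ℝ) (hτ0 : 0 < F0 τ) (hτ1 : F0 τ < 1)
    (δ : ℝ) (hδ : 1 < δ) (hδτ : δ * F0 τ < 1)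
    (β : ℝ) (hβ : β = (1 - δ * F0 τ) / (1 - F0 τ))
    (F : ℝ → ℝ)
    (hF : ∀ x, F x = if x ≤ τ then δ * F0 x else β * (F0 x - F0 τ) + δ * F0 τ)
    (D : ℝ → ℝ) (hD : ∀ x, D x = F x - F0 x)
    (Qstar : ℝ → ℝ) (hQstar : ∀ x, Qstar x = D x / Real.sqrt (F0 τ * (1 - F0 τ))) :
    Qstar τ = (δ - β) * Real.sqrt (F0 τ * (1 - F0 τ)) ∧
      IsGreatest (Set.range Qstar) ((δ - β) * Real.sqrt (F0 τ * (1 - F0 τ))) ∧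
      IsGreatest ((fun x => D x / Real.sqrt (F0 x * (1 - F0 x))) '' {x | 0 < F0 x ∧ F0 x < 1})
        ((δ - β) * Real.sqrt (F0 τ * (1 - F0 τ))) :=
  sup_Qstar_eq_sup_Q_general F0 hmono τ hτ0 hτ1 δ hδ β hβ F hF D hD Qstar hQstar
end
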